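/- The Shapley-based contribution function ctrb^s satisfies the contribution existence principle with respect to each of the QE, DFQuAD, SD-DFQuAD, EB, and EBT semantics: for every acyclic QBAG G and a ∈ A, if σ_G(a) ≠ τ(a) then there exists x ∈ A∖{a} with ctrb^s_{G,a}(x) ≠ 0. -/

import Mathlib

open Finset

/-- A quantitative bipolar argumentation graph (QBAG): a finite set of arguments,
an initial strength function, and attack and support relations. -/
structure QBAG where
  args : Finset ℕ
  tau : ℕ → ℝ
  att : Finset (ℕ × ℕ)
  supp : Finset (ℕ × ℕ)

namespace QBAG

/-- The edge relation of the underlying directed graph (attack or support). -/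
def edge (G : QBAG) (x y : ℕ) : Prop := (x, y) ∈ G.att ∨ (x, y) ∈ G.supp

/-- Well-formedness: edges live on the arguments, attack and support are disjoint,
and initial strengths lie in [0,1]. -/
def WF (G : QBAG) : Prop :=
  (∀ p ∈ G.att, p.1 ∈ G.args ∧ p.2 ∈ G.args) ∧
  (∀ p ∈ G.supp, p.1 ∈ G.args ∧ p.2 ∈ G.args) ∧
  Disjoint G.att G.supp ∧
  (∀ a ∈ G.args, G.tau a ∈ Set.Icc (0 : ℝ) 1)

/-- Acyclicity of the directed graph (A, Att ∪ Supp). -/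
def Acyclic (G : QBAG) : Prop := ∀ x, ¬ Relation.TransGen G.edge x x

/-- Direct attackers of an argument. -/
def attackers (G : QBAG) (a : ℕ) : Finset ℕ :=
  (G.att.filter (fun p => p.2 = a)).image Prod.fst

/-- Direct supporters of an argument. -/
def supporters (G : QBAG) (a : ℕ) : Finset ℕ :=
  (G.supp.filter (fun p => p.2 = a)).image Prod.fst

/-- Restriction G↓S of a QBAG to a subset S of the arguments. -/
def restrict (G : QBAG) (S : Finset ℕ) : QBAG where
  args := G.args ∩ S
  tau := G.tau
  att := G.att.filter (fun p => p.1 ∈ S ∧ p.2 ∈ S)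
  supp := G.supp.filter (fun p => p.1 ∈ S ∧ p.2 ∈ S)

/-- G⁻: the QBAG G with every attack and support edge pointing into x removed. -/
def dropInto (G : QBAG) (x : ℕ) : QBAG where
  args := G.args
  tau := G.tau
  att := G.att.filter (fun p => p.2 ≠ x)
  supp := G.supp.filter (fun p => p.2 ≠ x)

/-- G[x←ε]: the QBAG G with the initial strength of x replaced by ε. -/
def setTau (G : QBAG) (x : ℕ) (ε : ℝ) : QBAG where
  args := G.args
  tau := Function.update G.tau x ε
  att := G.att
  supp := G.supp

end QBAG

noncomputable section

/-- Sum aggregation. -/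
def sumAgg (G : QBAG) (s : ℕ → ℝ) (a : ℕ) : ℝ :=
  (∑ y ∈ G.supporters a, s y) - (∑ y ∈ G.attackers a, s y)

/-- Product aggregation. -/
def prodAgg (G : QBAG) (s : ℕ → ℝ) (a : ℕ) : ℝ :=
  (∏ y ∈ G.attackers a, (1 - s y)) - (∏ y ∈ G.supporters a, (1 - s y))

/-- Top aggregation. -/
def topAgg (G : QBAG) (s : ℕ → ℝ) (a : ℕ) : ℝ :=
  (G.supporters a).fold max 0 s - (G.attackers a).fold max 0 s

/-- h for the 2-Max(1) influence function. -/
def h2 (x : ℝ) : ℝ := max 0 x ^ 2 / (1 + max 0 x ^ 2)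

/-- h for the 1-Max(1) influence function. -/
def h1 (x : ℝ) : ℝ := max 0 x / (1 + max 0 x)

/-- 2-Max(1) influence function (used by QE). -/
def iotaQE (w s : ℝ) : ℝ := w - w * h2 (-s) + (1 - w) * h2 s

/-- Linear(1) influence function (used by DFQuAD). -/
def iotaLin (w s : ℝ) : ℝ := w - w * max 0 (-s) + (1 - w) * max 0 s

/-- 1-Max(1) influence function (used by SD-DFQuAD). -/
def iotaSD (w s : ℝ) : ℝ := w - w * h1 (-s) + (1 - w) * h1 s

/-- Euler-based influence function (used by EB and EBT). -/
def iotaEB (w s : ℝ) : ℝ := 1 - (1 - w ^ 2) / (1 + w * Real.exp s)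

/-- σ is a modular semantics with aggregation `agg` and influence `iota`:
on every well-formed acyclic QBAG the final strengths satisfy the defining equations. -/
def IsSemantics (agg : QBAG → (ℕ → ℝ) → ℕ → ℝ) (iota : ℝ → ℝ → ℝ)
    (σ : QBAG → ℕ → ℝ) : Prop :=
  ∀ G : QBAG, G.WF → G.Acyclic → ∀ a ∈ G.args, σ G a = iota (G.tau a) (agg G (σ G) a)

/-- QE semantics. -/
def IsQE (σ : QBAG → ℕ → ℝ) : Prop := IsSemantics sumAgg iotaQE σ

/-- DFQuAD semantics. -/
def IsDF (σ : QBAG → ℕ → ℝ) : Prop := IsSemantics prodAgg iotaLin σ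

/-- SD-DFQuAD semantics. -/
def IsSD (σ : QBAG → ℕ → ℝ) : Prop := IsSemantics prodAgg iotaSD σ

/-- EB semantics. -/
def IsEB (σ : QBAG → ℕ → ℝ) : Prop := IsSemantics sumAgg iotaEB σ

/-- EBT semantics. -/
def IsEBT (σ : QBAG → ℕ → ℝ) : Prop := IsSemantics topAgg iotaEB σ

/-- A gradual semantics assigns final strengths in [0,1] on acyclic QBAGs. -/
def IsGradualSemantics (σ : QBAG → ℕ → ℝ) : Prop :=
  ∀ G : QBAG, G.WF → G.Acyclic → ∀ a ∈ G.args, σ G a ∈ Set.Icc (0 : ℝ) 1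

/-- Removal-based contribution: ctrb^r_{G,a}(x) = σ_G(a) − σ_{G↓(A∖{x})}(a). -/
def ctrbR (σ : QBAG → ℕ → ℝ) (G : QBAG) (a x : ℕ) : ℝ :=
  σ G a - σ (G.restrict (G.args.erase x)) a

/-- Intrinsic-removal contribution: ctrb^{ri}_{G,a}(x) = σ_{G⁻}(a) − σ_{G↓(A∖{x})}(a). -/
def ctrbRI (σ : QBAG → ℕ → ℝ) (G : QBAG) (a x : ℕ) : ℝ :=
  σ (G.dropInto x) a - σ (G.restrict (G.args.erase x)) a

/-- Shapley-based contribution. -/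
def ctrbS (σ : QBAG → ℕ → ℝ) (G : QBAG) (a x : ℕ) : ℝ :=
  ∑ X ∈ ((G.args.erase a).erase x).powerset,
    ((X.card.factorial : ℝ) * ((G.args.erase a).card - X.card - 1).factorial /
      (G.args.erase a).card.factorial) *
    (σ (G.restrict (G.args \ X)) a - σ (G.restrict (G.args \ insert x X)) a)

/-- Gradient-based contribution: the derivative at ε = τ(x) (within [0,1]) of
the map ε ↦ σ_{G[x←ε]}(a). -/
def ctrbG (σ : QBAG → ℕ → ℝ) (G : QBAG) (a x : ℕ) : ℝ :=
  derivWithin (fun ε => σ (G.setTau x ε) a) (Set.Icc (0 : ℝ) 1) (G.tau x)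

/-- The contribution existence principle. -/
def ContributionExistence (ctrb : QBAG → ℕ → ℕ → ℝ) (σ : QBAG → ℕ → ℝ) : Prop :=
  ∀ G : QBAG, G.WF → G.Acyclic → ∀ a ∈ G.args,
    σ G a ≠ G.tau a → ∃ x ∈ G.args, x ≠ a ∧ ctrb G a x ≠ 0

/-- The quantitative contribution existence principle. -/
def QuantContributionExistence (ctrb : QBAG → ℕ → ℕ → ℝ) (σ : QBAG → ℕ → ℝ) : Prop :=
  ∀ G : QBAG, G.WF → G.Acyclic → ∀ a ∈ G.args,
    ∑ x ∈ G.args.erase a, ctrb G a x = σ G a - G.tau a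

/-- The strong faithfulness principle. -/
def StrongFaithfulness (ctrb : QBAG → ℕ → ℕ → ℝ) (σ : QBAG → ℕ → ℝ) : Prop :=
  ∀ G : QBAG, G.WF → G.Acyclic → ∀ a ∈ G.args, ∀ x ∈ G.args,
    ∀ ε ∈ Set.Icc (0 : ℝ) 1,
      (ctrb G a x < 0 →
        (ε < G.tau x → σ G a < σ (G.setTau x ε) a) ∧
        (ε > G.tau x → σ G a > σ (G.setTau x ε) a)) ∧
      (ctrb G a x = 0 → σ G a = σ (G.setTau x ε) a) ∧
      (ctrb G a x > 0 →
        (ε < G.tau x → σ G a > σ (G.setTau x ε) a) ∧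
        (ε > G.tau x → σ G a < σ (G.setTau x ε) a))

/-- The local faithfulness principle. -/
def LocalFaithfulness (ctrb : QBAG → ℕ → ℕ → ℝ) (σ : QBAG → ℕ → ℝ) : Prop :=
  ∀ G : QBAG, G.WF → G.Acyclic → ∀ a ∈ G.args, ∀ x ∈ G.args,
    ∃ δ > 0, ∀ ε ∈ Set.Icc (G.tau x - δ) (G.tau x + δ) ∩ Set.Icc (0 : ℝ) 1,
      (ctrb G a x < 0 →
        (ε < G.tau x → σ G a < σ (G.setTau x ε) a) ∧
        (ε > G.tau x → σ G a > σ (G.setTau x ε) a)) ∧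
      (ctrb G a x > 0 →
        (ε < G.tau x → σ G a > σ (G.setTau x ε) a) ∧
        (ε > G.tau x → σ G a < σ (G.setTau x ε) a))

/-- The quantitative local faithfulness principle: the map ε ↦ σ_{G[x←ε]}(a) is
differentiable (within [0,1]) at τ(x) with derivative ctrb_{G,a}(x); equivalently
σ_{G[x←τ(x)+ε]}(a) = σ_G(a) + ε·ctrb_{G,a}(x) + e(ε) with e(ε)/ε → 0. -/
def QuantLocalFaithfulness (ctrb : QBAG → ℕ → ℕ → ℝ) (σ : QBAG → ℕ → ℝ) : Prop :=
  ∀ G : QBAG, G.WF → G.Acyclic → ∀ a ∈ G.args, ∀ x ∈ G.args,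
    HasDerivWithinAt (fun ε => σ (G.setTau x ε) a) (ctrb G a x)
      (Set.Icc (0 : ℝ) 1) (G.tau x)

/-- The counterfactuality principle. -/
def Counterfactuality (ctrb : QBAG → ℕ → ℕ → ℝ) (σ : QBAG → ℕ → ℝ) : Prop :=
  ∀ G : QBAG, G.WF → G.Acyclic → ∀ a ∈ G.args, ∀ x ∈ G.args,
    (ctrb G a x < 0 → σ G a < σ (G.restrict (G.args.erase x)) a) ∧
    (ctrb G a x = 0 → σ G a = σ (G.restrict (G.args.erase x)) a) ∧
    (ctrb G a x > 0 → σ G a > σ (G.restrict (G.args.erase x)) a)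

/-- The quantitative counterfactuality principle. -/
def QuantCounterfactuality (ctrb : QBAG → ℕ → ℕ → ℝ) (σ : QBAG → ℕ → ℝ) : Prop :=
  ∀ G : QBAG, G.WF → G.Acyclic → ∀ a ∈ G.args, ∀ x ∈ G.args,
    ctrb G a x = σ G a - σ (G.restrict (G.args.erase x)) a

end

/-!
Shapley values are efficient: summed over all players they give `v N - v ∅`, since after
regrouping the double sum by coalitions every proper nonempty coalition `Y` occurs twice with
weight `(#N.choose #Y)⁻¹`, once with each sign. The Shapley-based contributions to `a` are the
Shapley values of the game `X ↦ -σ_{G↓(A∖X)}(a)` on the players `A ∖ {a}`, so they sum to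
`σ_G(a) - σ_{G↓{a}}(a)`. In `G↓{a}` the argument `a` has neither attackers nor supporters, and
each of the five influence functions fixes the initial strength at aggregate `0`, so
`σ_{G↓{a}}(a) = τ(a)`. Hence if all contributions vanish, `σ_G(a) = τ(a)`.
-/

noncomputable section Shapley

variable {α : Type*} [DecidableEq α]

def shapleyWeight (n k : ℕ) : ℝ := (k.factorial : ℝ) * (n - k - 1).factorial / n.factorial

def shapleyValue (N : Finset α) (v : Finset α → ℝ) (x : α) : ℝ :=
  ∑ X ∈ (N.erase x).powerset, shapleyWeight #N #X * (v (insert x X) - v X)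

lemma sub_mul_shapleyWeight {n k : ℕ} (hk : k < n) :
    ((n - k : ℕ) : ℝ) * shapleyWeight n k = ((n.choose k : ℕ) : ℝ)⁻¹ := by
  rw [Nat.cast_choose ℝ hk.le, shapleyWeight, inv_div,
    ← Nat.mul_factorial_pred (by omega : n - k ≠ 0)]
  push_cast
  field_simp

lemma mul_shapleyWeight_pred {n k : ℕ} (hk0 : 0 < k) (hk : k ≤ n) :
    (k : ℝ) * shapleyWeight n (k - 1) = ((n.choose k : ℕ) : ℝ)⁻¹ := by
  rw [Nat.cast_choose ℝ hk, shapleyWeight, inv_div, ← Nat.mul_factorial_pred hk0.ne',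
    show n - (k - 1) - 1 = n - k by omega]
  push_cast
  field_simp

lemma sum_sum_powerset_erase {M : Type*} [AddCommMonoid M] (N : Finset α) (f : Finset α → M) :
    ∑ x ∈ N, ∑ X ∈ (N.erase x).powerset, f X = ∑ Y ∈ N.powerset, #(N \ Y) • f Y := by
  rw [sum_comm' (t' := N.powerset) (s' := fun Y => N \ Y)]
  · simp only [sum_const]
  · intro x Y
    simp only [mem_powerset, subset_erase, mem_sdiff]
    tauto

lemma sum_powerset_erase_insert {M : Type*} [AddCommMonoid M] {N : Finset α} {x : α}
    (hx : x ∈ N) (f : Finset α → M) :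
    ∑ X ∈ (N.erase x).powerset, f (insert x X) = ∑ Y ∈ N.powerset with x ∈ Y, f Y := by
  refine Finset.sum_nbij' (insert x) (fun Y => Y.erase x) ?_ ?_ ?_ ?_ fun _ _ => rfl <;>
    intro X hX <;> simp_all [subset_erase, insert_subset_iff, erase_subset_iff_of_mem hx]

lemma sum_sum_powerset_erase_insert {M : Type*} [AddCommMonoid M] (N : Finset α)
    (f : Finset α → M) :
    ∑ x ∈ N, ∑ X ∈ (N.erase x).powerset, f (insert x X) = ∑ Y ∈ N.powerset, #Y • f Y := by
  rw [sum_congr rfl fun x hx => sum_powerset_erase_insert hx f,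
    sum_comm' (t' := N.powerset) (s' := id)]
  · simp only [id, sum_const]
  · intro x Y
    simp only [mem_filter, mem_powerset, id]
    exact ⟨fun h => ⟨h.2.2, h.2.1⟩, fun h => ⟨h.2 h.1, h.2, h.1⟩⟩

lemma card_mul_shapleyWeight_pred_sub {N Y : Finset α} (hY : Y ⊆ N) :
    (#Y : ℝ) * shapleyWeight #N (#Y - 1) - #(N \ Y) * shapleyWeight #N #Y =
      (if Y = N then 1 else 0) - (if Y = ∅ then 1 else 0) := by
  rcases Y.eq_empty_or_nonempty with rfl | hYne
  · rcases N.eq_empty_or_nonempty with rfl | hN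
    · simp
    · have := sub_mul_shapleyWeight (n := #N) (k := 0) hN.card_pos
      simp only [Nat.sub_zero, Nat.choose_zero_right, Nat.cast_one, inv_one] at this
      simp [this, hN.ne_empty.symm]
  rcases eq_or_ne Y N with rfl | hYN
  · have := mul_shapleyWeight_pred hYne.card_pos le_rfl
    simp only [Nat.choose_self, Nat.cast_one, inv_one] at this
    simp [this, hYne.ne_empty]
  have hlt : #Y < #N := card_lt_card (ssubset_of_subset_of_ne hY hYN)
  rw [card_sdiff_of_subset hY, mul_shapleyWeight_pred hYne.card_pos hlt.le,
    sub_mul_shapleyWeight hlt, if_neg hYN, if_neg hYne.ne_empty, sub_self, sub_self]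

theorem sum_shapleyValue (N : Finset α) (v : Finset α → ℝ) :
    ∑ x ∈ N, shapleyValue N v x = v N - v ∅ := by
  have hinsert : ∀ x ∈ N, ∑ X ∈ (N.erase x).powerset, shapleyWeight #N #X * v (insert x X) =
      ∑ X ∈ (N.erase x).powerset, shapleyWeight #N (#(insert x X) - 1) * v (insert x X) :=
    fun x _ => sum_congr rfl fun X hX => by
      rw [card_insert_of_notMem fun h => by simpa using mem_powerset.1 hX h, Nat.add_sub_cancel]
  simp only [shapleyValue, mul_sub, sum_sub_distrib]
  rw [sum_congr rfl hinsert,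
    sum_sum_powerset_erase_insert N (fun Y => shapleyWeight #N (#Y - 1) * v Y),
    sum_sum_powerset_erase N (fun Y => shapleyWeight #N #Y * v Y), ← sum_sub_distrib]
  calc _ = ∑ Y ∈ N.powerset, ((if Y = N then 1 else 0) - (if Y = ∅ then 1 else 0)) * v Y :=
        sum_congr rfl fun Y hY => by
          rw [← card_mul_shapleyWeight_pred_sub (mem_powerset.1 hY), nsmul_eq_mul, nsmul_eq_mul]
          ring
    _ = v N - v ∅ := by simp [sub_mul, sum_sub_distrib, ite_mul]

end Shapley

namespace QBAG

variable {G : QBAG}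

lemma WF.restrict (hG : G.WF) (S : Finset ℕ) : (G.restrict S).WF := by
  obtain ⟨hatt, hsupp, hdisj, htau⟩ := hG
  refine ⟨fun p hp => ?_, fun p hp => ?_, ?_, fun a ha => htau a (mem_inter.1 ha).1⟩
  · obtain ⟨hp, hp1, hp2⟩ := mem_filter.1 hp
    exact ⟨mem_inter.2 ⟨(hatt p hp).1, hp1⟩, mem_inter.2 ⟨(hatt p hp).2, hp2⟩⟩
  · obtain ⟨hp, hp1, hp2⟩ := mem_filter.1 hp
    exact ⟨mem_inter.2 ⟨(hsupp p hp).1, hp1⟩, mem_inter.2 ⟨(hsupp p hp).2, hp2⟩⟩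
  · exact hdisj.mono (filter_subset _ _) (filter_subset _ _)

lemma Acyclic.restrict (hG : G.Acyclic) (S : Finset ℕ) : (G.restrict S).Acyclic :=
  fun x hx => hG x <| Relation.TransGen.mono
    (fun _ _ => Or.imp (fun h => (mem_filter.1 h).1) (fun h => (mem_filter.1 h).1)) x x hx

lemma restrict_args_self (hG : G.WF) : G.restrict G.args = G := by
  obtain ⟨hatt, hsupp, -, -⟩ := hG
  cases G
  simp only [QBAG.restrict, inter_self, mk.injEq, true_and]
  exact ⟨filter_true_of_mem hatt, filter_true_of_mem hsupp⟩

lemma Acyclic.not_edge_self (hG : G.Acyclic) (a : ℕ) : ¬ G.edge a a :=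
  fun h => hG a (.single h)

lemma Acyclic.att_restrict_singleton (hG : G.Acyclic) (a : ℕ) : (G.restrict {a}).att = ∅ := by
  refine filter_false_of_mem fun ⟨b, c⟩ hp hbc => ?_
  obtain ⟨rfl, rfl⟩ : b = a ∧ c = a := by simpa using hbc
  exact hG.not_edge_self _ (.inl hp)

lemma Acyclic.supp_restrict_singleton (hG : G.Acyclic) (a : ℕ) :
    (G.restrict {a}).supp = ∅ := by
  refine filter_false_of_mem fun ⟨b, c⟩ hp hbc => ?_
  obtain ⟨rfl, rfl⟩ : b = a ∧ c = a := by simpa using hbc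
  exact hG.not_edge_self _ (.inr hp)

end QBAG

section Semantics

variable {G : QBAG} {a : ℕ}

lemma sumAgg_eq_zero (s : ℕ → ℝ) (hatt : G.attackers a = ∅) (hsupp : G.supporters a = ∅) :
    sumAgg G s a = 0 := by
  simp [sumAgg, hatt, hsupp]

lemma prodAgg_eq_zero (s : ℕ → ℝ) (hatt : G.attackers a = ∅) (hsupp : G.supporters a = ∅) :
    prodAgg G s a = 0 := by
  simp [prodAgg, hatt, hsupp]

lemma topAgg_eq_zero (s : ℕ → ℝ) (hatt : G.attackers a = ∅) (hsupp : G.supporters a = ∅) :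
    topAgg G s a = 0 := by
  simp [topAgg, hatt, hsupp]

lemma iotaQE_zero (w : ℝ) : iotaQE w 0 = w := by simp [iotaQE, h2]

lemma iotaLin_zero (w : ℝ) : iotaLin w 0 = w := by simp [iotaLin]

lemma iotaSD_zero (w : ℝ) : iotaSD w 0 = w := by simp [iotaSD, h1]

lemma iotaEB_zero {w : ℝ} (hw : 0 ≤ w) : iotaEB w 0 = w := by
  have : 1 + w ≠ 0 := by positivity
  rw [iotaEB, Real.exp_zero, mul_one, show (1 : ℝ) - w ^ 2 = (1 - w) * (1 + w) by ring,
    mul_div_cancel_right₀ _ this]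
  ring

lemma IsSemantics.apply_restrict_singleton {agg : QBAG → (ℕ → ℝ) → ℕ → ℝ} {iota : ℝ → ℝ → ℝ}
    {σ : QBAG → ℕ → ℝ} (hσ : IsSemantics agg iota σ)
    (hagg : ∀ G s a, G.attackers a = ∅ → G.supporters a = ∅ → agg G s a = 0)
    (hiota : ∀ w, 0 ≤ w → iota w 0 = w) (hWF : G.WF) (hAcyc : G.Acyclic) (ha : a ∈ G.args) :
    σ (G.restrict {a}) a = G.tau a := by
  have ha' : a ∈ (G.restrict {a}).args := mem_inter.2 ⟨ha, mem_singleton_self a⟩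
  rw [hσ _ (hWF.restrict {a}) (hAcyc.restrict {a}) a ha',
    hagg _ _ _ (by simp [QBAG.attackers, hAcyc.att_restrict_singleton])
      (by simp [QBAG.supporters, hAcyc.supp_restrict_singleton])]
  exact hiota _ (hWF.2.2.2 a ha).1

lemma ctrbS_eq_shapleyValue (σ : QBAG → ℕ → ℝ) (G : QBAG) (a x : ℕ) :
    ctrbS σ G a x =
      shapleyValue (G.args.erase a) (fun X => -σ (G.restrict (G.args \ X)) a) x :=
  sum_congr rfl fun _ _ => by rw [shapleyWeight]; ring

lemma sum_ctrbS (σ : QBAG → ℕ → ℝ) (hWF : G.WF) (ha : a ∈ G.args) :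
    ∑ x ∈ G.args.erase a, ctrbS σ G a x = σ G a - σ (G.restrict {a}) a := by
  simp only [ctrbS_eq_shapleyValue]
  rw [sum_shapleyValue, sdiff_erase_self ha, sdiff_empty, QBAG.restrict_args_self hWF]
  ring

end Semantics

/-- The Shapley-based contribution function satisfies contribution existence
w.r.t. each of the QE, DFQuAD, SD-DFQuAD, EB, and EBT semantics. -/
theorem ctrbS_satisfies_contribution_existence
    (σ : QBAG → ℕ → ℝ) (hσ : IsQE σ ∨ IsDF σ ∨ IsSD σ ∨ IsEB σ ∨ IsEBT σ) :
    ContributionExistence (ctrbS σ) σ := by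
  intro G hWF hAcyc a ha hne
  by_contra! hzero
  have hsingle : σ (G.restrict {a}) a = G.tau a := by
    rcases hσ with h | h | h | h | h
    · exact h.apply_restrict_singleton (fun _ s _ => sumAgg_eq_zero s) (fun w _ => iotaQE_zero w)
        hWF hAcyc ha
    · exact h.apply_restrict_singleton (fun _ s _ => prodAgg_eq_zero s) (fun w _ => iotaLin_zero w)
        hWF hAcyc ha
    · exact h.apply_restrict_singleton (fun _ s _ => prodAgg_eq_zero s) (fun w _ => iotaSD_zero w)
        hWF hAcyc ha
    · exact h.apply_restrict_singleton (fun _ s _ => sumAgg_eq_zero s) (fun _ => iotaEB_zero)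
        hWF hAcyc ha
    · exact h.apply_restrict_singleton (fun _ s _ => topAgg_eq_zero s) (fun _ => iotaEB_zero)
        hWF hAcyc ha
  have hsum := sum_ctrbS σ hWF ha
  rw [sum_eq_zero fun x hx => hzero x (mem_of_mem_erase hx) (ne_of_mem_erase hx)] at hsum
  exact hne (by linarith)
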